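/- arXiv:1309.7543 — 3 statements merged into one kernel-verified Lean document; each statement's English description precedes it below -/
import Mathlib

section
/- Let x be a finite symmetric Borel measure on the extended reals (i.e., for every Borel set E, x(-E) = ∫_E e^{-α} x(dα)) and let f : ℝ̄ → ℝ be a bounded measurable odd function. Then ∫ f(α) x(dα) = ∫ f(α)·tanh(α/2) x(dα). -/
open MeasureTheory Real Set Filter
open scoped ENNReal NNReal

noncomputable section

/-- Exponential on the extended reals, valued in `ℝ≥0∞` (with `e^{-∞}=0`, `e^{∞}=∞`). -/
def eexp (a : EReal) : ℝ≥0∞ :=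
  if a = ⊤ then ⊤ else if a = ⊥ then 0 else ENNReal.ofReal (Real.exp a.toReal)

/-- A finite Borel measure `x` on the extended reals is *symmetric* if
`x(-E) = ∫_E e^{-α} x(dα)` for every Borel set `E`. -/
def SymmetricM (x : Measure EReal) : Prop :=
  ∀ E : Set EReal, MeasurableSet E →
    x ((fun a : EReal => -a) ⁻¹' E) = ∫⁻ a in E, eexp (-a) ∂x

/-- `tanh(α/2)` extended continuously to the extended reals. -/
def etanh (a : EReal) : ℝ :=
  if a = ⊤ then 1 else if a = ⊥ then -1 else Real.tanh (a.toReal / 2)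

/-- The moment functional `M_k(x) = ∫ tanh^{2k}(α/2) x(dα)`. -/
def Mk (k : ℕ) (x : Measure EReal) : ℝ := ∫ a, (etanh a) ^ (2 * k) ∂x

/-- The entropy integrand `log₂(1+e^{-α})`, with the convention that it vanishes at `±∞`
(symmetric measures put no mass at `-∞`). -/
def entFn (a : EReal) : ℝ :=
  if a = ⊤ then 0 else if a = ⊥ then 0 else Real.logb 2 (1 + Real.exp (-a.toReal))

/-- The entropy functional `H(x) = ∫ log₂(1+e^{-α}) x(dα)`. -/
def Hent (x : Measure EReal) : ℝ := ∫ a, entFn a ∂x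

/-- Variable-node convolution `⊛`: pushforward of the product measure under addition. -/
def vconv (x y : Measure EReal) : Measure EReal :=
  Measure.map (fun p : EReal × EReal => p.1 + p.2) (x.prod y)

/-- Inverse hyperbolic tangent on `ℝ`. -/
def artanh (t : ℝ) : ℝ := Real.log ((1 + t) / (1 - t)) / 2

/-- The check-node combination map `(α₁,α₂) ↦ 2 tanh⁻¹(tanh(α₁/2) tanh(α₂/2))` on `ℝ̄ × ℝ̄`. -/
def boxFn (p : EReal × EReal) : EReal :=
  if etanh p.1 * etanh p.2 = 1 then ⊤
  else if etanh p.1 * etanh p.2 = -1 then ⊥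
  else ((2 * _root_.artanh (etanh p.1 * etanh p.2) : ℝ) : EReal)

/-- Check-node convolution `⊞`: pushforward of the product measure under `boxFn`. -/
def cconv (x y : Measure EReal) : Measure EReal :=
  Measure.map boxFn (x.prod y)

/-- Degradation order: `Degraded x' x` means `x' ⪰ x`, i.e.
`∫ f(|tanh(α/2)|) dx' ≥ ∫ f(|tanh(α/2)|) dx` for all concave non-increasing `f : [0,1] → ℝ`. -/
def Degraded (x' x : Measure EReal) : Prop :=
  ∀ f : ℝ → ℝ, ConcaveOn ℝ (Set.Icc (0:ℝ) 1) f → AntitoneOn f (Set.Icc (0:ℝ) 1) →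
    ∫ a, f |etanh a| ∂x ≤ ∫ a, f |etanh a| ∂x'

/-- The coefficients `γ_k = 1/((log 2)·2k·(2k−1))`. -/
def gam (k : ℕ) : ℝ := 1 / (Real.log 2 * (2 * (k : ℝ)) * (2 * (k : ℝ) - 1))

/-- The entropy distance `d_H(x₁,x₂) = Σ_{k≥1} γ_k |M_k(x₁) − M_k(x₂)|`. -/
def dH (x y : Measure EReal) : ℝ := ∑' k : ℕ, gam (k + 1) * |Mk (k + 1) x - Mk (k + 1) y|

/-- The Bhattacharyya integrand `e^{-α/2}` (vanishing at `±∞`, as symmetric measures put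
no mass at `-∞`). -/
def bFn (a : EReal) : ℝ :=
  if a = ⊤ then 0 else if a = ⊥ then 0 else Real.exp (-(a.toReal) / 2)

/-- The Bhattacharyya functional `B(x) = ∫ e^{-α/2} x(dα)`. -/
def Bhat (x : Measure EReal) : ℝ := ∫ a, bFn a ∂x

/-- `n`-fold variable-node convolution power `x^{⊛n}` (with `x^{⊛0} = Δ_0`). -/
def vpow (x : Measure EReal) : ℕ → Measure EReal
  | 0 => Measure.dirac 0
  | n + 1 => vconv (vpow x n) x


lemma abs_tanh_le_one (t : ℝ) : |Real.tanh t| ≤ 1 := by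
  rw [Real.tanh_eq_sinh_div_cosh, abs_div, abs_of_pos (Real.cosh_pos t),
    div_le_one (Real.cosh_pos t), Real.abs_sinh, ← Real.cosh_abs t]
  rw [Real.sinh_eq, Real.cosh_eq]
  have := Real.exp_pos (-|t|)
  linarith

lemma tanh_half_eq (t : ℝ) :
    Real.tanh (t / 2) = (1 - Real.exp (-t)) / (1 + Real.exp (-t)) := by
  rw [Real.tanh_eq_sinh_div_cosh, Real.sinh_eq, Real.cosh_eq]
  have h0 : Real.exp (t / 2) + Real.exp (-(t / 2)) > 0 := by positivity
  have h1 : (0:ℝ) < 1 + Real.exp (-t) := by positivity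
  have h2 : Real.exp (t / 2) * Real.exp (-t) = Real.exp (-(t / 2)) := by
    rw [← Real.exp_add]; ring_nf
  have h3 : Real.exp (-(t / 2)) * Real.exp (-t) = Real.exp (-(3 * t / 2)) := by
    rw [← Real.exp_add]; ring_nf
  have hdiv : ∀ A B : ℝ, 0 < A + B → (A - B) / 2 / ((A + B) / 2) = (A - B) / (A + B) := by
    intro A B hAB; field_simp
  rw [hdiv _ _ h0, div_eq_div_iff h0.ne' h1.ne']
  linear_combination 2 * h2

lemma measurable_eexp : Measurable eexp := by
  unfold eexp
  refine Measurable.ite (measurableSet_singleton _) measurable_const ?_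
  refine Measurable.ite (measurableSet_singleton _) measurable_const ?_
  exact ENNReal.measurable_ofReal.comp (Real.measurable_exp.comp measurable_ereal_toReal)

/-- For a finite symmetric Borel measure `x` on the extended reals and a
bounded measurable odd function `f`, `∫ f(α) x(dα) = ∫ f(α)·tanh(α/2) x(dα)`. -/
theorem stmt0 (x : Measure EReal) [IsFiniteMeasure x] (hx : SymmetricM x)
    (f : EReal → ℝ) (hbdd : ∃ C : ℝ, ∀ a, |f a| ≤ C) (hmeas : Measurable f)
    (hodd : ∀ a : EReal, f (-a) = -f a) :
    ∫ a, f a ∂x = ∫ a, f a * etanh a ∂x := by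
  obtain ⟨C, hC⟩ := hbdd
  -- the measure puts no mass at ±∞
  have hbot : x {⊥} = 0 := by
    have := hx {⊤} (measurableSet_singleton _)
    rw [lintegral_singleton] at this
    have hpre : (fun a : EReal => -a) ⁻¹' {(⊤ : EReal)} = {⊥} := by
      ext a
      simp only [Set.mem_preimage, Set.mem_singleton_iff, EReal.neg_eq_top_iff]
    rw [hpre] at this
    simpa [eexp] using this
  have htop : x {⊤} = 0 := by
    have := hx {⊥} (measurableSet_singleton _)
    rw [lintegral_singleton] at this
    have hpre : (fun a : EReal => -a) ⁻¹' {(⊥ : EReal)} = {⊤} := by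
      ext a
      simp only [Set.mem_preimage, Set.mem_singleton_iff, EReal.neg_eq_bot_iff]
    rw [hpre] at this
    simpa [eexp, hbot] using this
  have hfin : ∀ᵐ a ∂x, a ≠ ⊤ ∧ a ≠ ⊥ := by
    have h1 : ∀ᵐ a ∂x, a ≠ ⊤ := by
      rw [ae_iff]; simpa using htop
    have h2 : ∀ᵐ a ∂x, a ≠ ⊥ := by
      rw [ae_iff]; simpa using hbot
    filter_upwards [h1, h2] with a ha hb using ⟨ha, hb⟩
  -- weight and auxiliary function
  set w : EReal → ℝ≥0 := fun a => (eexp (-a)).toNNReal with hw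
  set h : EReal → ℝ := fun a => f a / (1 + Real.exp (-(a.toReal))) with hh
  have hwmeas : Measurable w :=
    ENNReal.measurable_toNNReal.comp (measurable_eexp.comp measurable_neg)
  have hhmeas : Measurable h := by
    apply hmeas.div
    exact (measurable_const.add ((measurable_ereal_toReal.neg).exp))
  -- pushforward under negation equals withDensity
  have hmap : x.map (fun a : EReal => -a) = x.withDensity (fun a => ((w a : ℝ≥0) : ℝ≥0∞)) := by
    have h1 : x.map (fun a : EReal => -a) = x.withDensity (fun a => eexp (-a)) := by
      ext E hE
      rw [Measure.map_apply measurable_neg hE, withDensity_apply _ hE, hx E hE]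
    rw [h1]
    apply withDensity_congr_ae
    filter_upwards [hfin] with a ⟨ha, hb⟩
    have : eexp (-a) ≠ ⊤ := by
      simp only [eexp]
      rw [if_neg (by simp [EReal.neg_eq_top_iff, hb]), if_neg (by simp [EReal.neg_eq_bot_iff, ha])]
      exact ENNReal.ofReal_ne_top
    exact (ENNReal.coe_toNNReal this).symm
  -- change of variables for h
  have key : ∫ a, h (-a) ∂x = ∫ a, (w a : ℝ) * h a ∂x := by
    calc ∫ a, h (-a) ∂x = ∫ a, h a ∂(x.map (fun a : EReal => -a)) := by
          rw [integral_map measurable_neg.aemeasurable hhmeas.aestronglyMeasurable]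
      _ = ∫ a, h a ∂(x.withDensity (fun a => ((w a : ℝ≥0) : ℝ≥0∞))) := by rw [hmap]
      _ = ∫ a, w a • h a ∂x := integral_withDensity_eq_integral_smul hwmeas h
      _ = ∫ a, (w a : ℝ) * h a ∂x := by simp [NNReal.smul_def, smul_eq_mul]
  -- pointwise facts for finite a
  have hwa : ∀ a : EReal, a ≠ ⊤ → a ≠ ⊥ → (w a : ℝ) = Real.exp (-(a.toReal)) := by
    intro a ha hb
    simp only [hw, eexp]
    rw [if_neg (by simp [EReal.neg_eq_top_iff, hb]), if_neg (by simp [EReal.neg_eq_bot_iff, ha])]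
    rw [ENNReal.coe_toNNReal_eq_toReal, ENNReal.toReal_ofReal (Real.exp_nonneg _),
      EReal.toReal_neg_eq]
  -- the odd-function relation: a.e., h(-a) = -(w a * h a)
  have hoddw : ∀ᵐ a ∂x, h (-a) = -((w a : ℝ) * h a) := by
    filter_upwards [hfin] with a ⟨ha, hb⟩
    have hwv := hwa a ha hb
    set t := a.toReal
    have hnt : (-a).toReal = -t := EReal.toReal_neg_eq
    have he1 : (0:ℝ) < 1 + Real.exp t := by positivity
    have he2 : (0:ℝ) < 1 + Real.exp (-t) := by positivity
    simp only [hh, hodd a, hnt, neg_neg, hwv]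
    have hexp : Real.exp (-t) = (Real.exp t)⁻¹ := Real.exp_neg t
    have hmul : Real.exp (-t) * Real.exp t = 1 := by
      rw [← Real.exp_add]; simp
    field_simp
    have hmul' : Real.exp (-a.toReal) * Real.exp t = 1 := hmul; linear_combination (f a) * hmul'
  -- hence ∫ w·h = 0
  have hzero : ∫ a, (w a : ℝ) * h a ∂x = 0 := by
    have h1 : ∫ a, h (-a) ∂x = ∫ a, -((w a : ℝ) * h a) ∂x := integral_congr_ae hoddw
    rw [integral_neg] at h1
    rw [key] at h1
    linarith
  -- integrability of f and f * etanh
  have hCnn : 0 ≤ C := le_trans (abs_nonneg _) (hC ⊥)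
  have hetanh_meas : Measurable etanh := by
    unfold etanh
    refine Measurable.ite (measurableSet_singleton _) measurable_const ?_
    refine Measurable.ite (measurableSet_singleton _) measurable_const ?_
    have htanh : Measurable Real.tanh := by
      have he : Real.tanh = fun x => Real.sinh x / Real.cosh x :=
        funext Real.tanh_eq_sinh_div_cosh
      rw [he]
      exact Real.continuous_sinh.measurable.div Real.continuous_cosh.measurable
    exact htanh.comp (measurable_ereal_toReal.div_const 2)
  have hetanh_le : ∀ a, |etanh a| ≤ 1 := by
    intro a
    unfold etanh
    split_ifs <;> simp [abs_tanh_le_one]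
  have hint_f : Integrable f x := by
    refine Integrable.mono' (integrable_const C) hmeas.aestronglyMeasurable ?_
    exact Filter.Eventually.of_forall fun a => hC a
  have hint_fe : Integrable (fun a => f a * etanh a) x := by
    refine Integrable.mono' (integrable_const C) (hmeas.mul hetanh_meas).aestronglyMeasurable ?_
    refine Filter.Eventually.of_forall fun a => ?_
    rw [Real.norm_eq_abs, abs_mul]
    calc |f a| * |etanh a| ≤ C * 1 :=
          mul_le_mul (hC a) (hetanh_le a) (abs_nonneg _) hCnn
      _ = C := mul_one C
  -- the key pointwise identity a.e.: f·etanh = f - 2·(w·h)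
  have hptwise : ∀ᵐ a ∂x, f a * etanh a = f a - 2 * ((w a : ℝ) * h a) := by
    filter_upwards [hfin] with a ⟨ha, hb⟩
    have hwv := hwa a ha hb
    set t := a.toReal
    have he2 : (0:ℝ) < 1 + Real.exp (-t) := by positivity
    have het : etanh a = (1 - Real.exp (-t)) / (1 + Real.exp (-t)) := by
      simp only [etanh, if_neg ha, if_neg hb]
      exact tanh_half_eq t
    rw [het, hwv]
    simp only [hh]
    field_simp
    ring
  -- integrability of w·h
  have hint_wh : Integrable (fun a => (w a : ℝ) * h a) x := by
    have h1 : Integrable (fun a => (f a - f a * etanh a) / 2) x :=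
      (hint_f.sub hint_fe).div_const 2
    refine h1.congr ?_
    filter_upwards [hptwise] with a ha
    linarith
  -- conclude
  have : ∫ a, f a * etanh a ∂x
      = ∫ a, (f a - 2 * ((w a : ℝ) * h a)) ∂x := integral_congr_ae hptwise
  rw [this, integral_sub hint_f (hint_wh.const_mul 2), integral_const_mul, hzero]
  ring
end
end

section
/- For symmetric probability measures x₁ and x₂ on ℝ̄, and k ∈ ℕ, the moment functional M_k(x) = ∫ tanh^{2k}(α/2) x(dα) is multiplicative under the check-node convolution: M_k(x₁ ⊞ x₂) = M_k(x₁)·M_k(x₂). -/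
open MeasureTheory Real Set Filter
open scoped ENNReal NNReal

noncomputable section

lemma abs_tanh_lt_one (x : ℝ) : |Real.tanh x| < 1 := by
  rw [Real.tanh_eq_sinh_div_cosh, abs_div, abs_of_pos (Real.cosh_pos x),
    div_lt_one (Real.cosh_pos x)]
  nlinarith [Real.cosh_sq x, sq_abs (Real.sinh x), Real.cosh_pos x, abs_nonneg (Real.sinh x)]

lemma continuous_tanh : Continuous Real.tanh := by
  have : Real.tanh = fun x => Real.sinh x / Real.cosh x := by
    funext x; exact Real.tanh_eq_sinh_div_cosh x
  rw [this]
  exact Real.continuous_sinh.div Real.continuous_cosh (fun x => (Real.cosh_pos x).ne')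

lemma abs_etanh_le_one (a : EReal) : |etanh a| ≤ 1 := by
  unfold etanh
  split_ifs <;> simp [abs_of_nonneg, (_root_.abs_tanh_lt_one _).le]

lemma tanh_artanh {t : ℝ} (h : |t| < 1) : Real.tanh (_root_.artanh t) = t := by
  obtain ⟨h1, h2⟩ := abs_lt.mp h
  have hu : (0:ℝ) < (1 + t) / (1 - t) := div_pos (by linarith) (by linarith)
  have he2 : Real.exp (_root_.artanh t) * Real.exp (_root_.artanh t) = (1 + t) / (1 - t) := by
    rw [← Real.exp_add, _root_.artanh]
    rw [show Real.log ((1+t)/(1-t)) / 2 + Real.log ((1+t)/(1-t)) / 2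
        = Real.log ((1+t)/(1-t)) by ring]
    exact Real.exp_log hu
  have hey := Real.exp_pos (_root_.artanh t)
  rw [Real.tanh_eq_sinh_div_cosh, Real.sinh_eq, Real.cosh_eq, Real.exp_neg]
  have h1t : (1:ℝ) - t ≠ 0 := by linarith
  rw [div_eq_iff (by positivity)]
  field_simp at he2 ⊢
  nlinarith [he2]

lemma measurable_etanh : Measurable etanh := by
  unfold etanh
  refine Measurable.ite ?_ measurable_const (Measurable.ite ?_ measurable_const ?_)
  · simp only [setOf_eq_eq_singleton]; exact measurableSet_singleton _
  · simp only [setOf_eq_eq_singleton]; exact measurableSet_singleton _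
  · exact continuous_tanh.measurable.comp (measurable_ereal_toReal.div_const 2)

lemma etanh_boxFn (p : EReal × EReal) : etanh (boxFn p) = etanh p.1 * etanh p.2 := by
  set t := etanh p.1 * etanh p.2 with ht
  unfold boxFn
  rw [← ht]
  split_ifs with h1 h2
  · simp [etanh, h1]
  · simp [etanh, h2]
  · have habs : |t| < 1 := by
      have : |t| ≤ 1 := by
        rw [ht, abs_mul]
        exact mul_le_one₀ (abs_etanh_le_one _) (abs_nonneg _) (abs_etanh_le_one _)
      rcases lt_or_eq_of_le this with h | h
      · exact h
      · rcases (abs_eq (by norm_num : (0:ℝ) ≤ 1)).mp h with h' | h'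
        · exact absurd h' h1
        · exact absurd h' h2
    have hne1 : ((2 * _root_.artanh t : ℝ) : EReal) ≠ ⊤ := EReal.coe_ne_top _
    have hne2 : ((2 * _root_.artanh t : ℝ) : EReal) ≠ ⊥ := EReal.coe_ne_bot _
    rw [etanh, if_neg hne1, if_neg hne2, EReal.toReal_coe]
    rw [show 2 * _root_.artanh t / 2 = _root_.artanh t by ring]
    exact _root_.tanh_artanh habs

lemma measurable_artanh : Measurable _root_.artanh := by
  unfold _root_.artanh
  exact (Real.measurable_log.comp ((measurable_const.add measurable_id).div
    (measurable_const.sub measurable_id))).div_const 2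

lemma measurable_boxFn : Measurable boxFn := by
  unfold boxFn
  have hm : Measurable (fun p : EReal × EReal => etanh p.1 * etanh p.2) :=
    (measurable_etanh.comp measurable_fst).mul (measurable_etanh.comp measurable_snd)
  refine Measurable.ite ?_ measurable_const (Measurable.ite ?_ measurable_const ?_)
  · exact hm (measurableSet_singleton 1)
  · exact hm (measurableSet_singleton (-1))
  · exact measurable_coe_real_ereal.comp ((_root_.measurable_artanh.comp hm).const_mul 2)

/-- The moment functional `M_k` is multiplicative under the check-node
convolution: `M_k(x₁ ⊞ x₂) = M_k(x₁)·M_k(x₂)`. -/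
theorem stmt3 (x1 x2 : Measure EReal) [IsProbabilityMeasure x1] [IsProbabilityMeasure x2]
    (h1 : SymmetricM x1) (h2 : SymmetricM x2) (k : ℕ) :
    Mk k (cconv x1 x2) = Mk k x1 * Mk k x2 :=  by
  have hm : Measurable (fun a : EReal => (etanh a) ^ (2 * k)) := measurable_etanh.pow_const _
  rw [Mk, cconv, integral_map measurable_boxFn.aemeasurable
    (hm.stronglyMeasurable.aestronglyMeasurable)]
  simp_rw [etanh_boxFn, mul_pow]
  rw [integral_prod_mul (f := fun a => etanh a ^ (2 * k)) (g := fun a => etanh a ^ (2 * k))]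
  rfl
end
end

section
/- For symmetric probability measures x₁, x₂, x₃, x₄ on ℝ̄, the entropy functional (extended linearly to signed measures) satisfies H((x₁−x₂) ⊛ (x₃−x₄)) + H((x₁−x₂) ⊞ (x₃−x₄)) = 0. -/
open MeasureTheory Real Set Filter
open scoped ENNReal NNReal

noncomputable section

/-! ### Auxiliary lemmas -/

lemma tanh_half (r : ℝ) : Real.tanh (r / 2) =
    (1 - Real.exp (-r)) / (1 + Real.exp (-r)) := by
  rw [Real.tanh_eq_sinh_div_cosh, Real.sinh_eq, Real.cosh_eq]
  have he : Real.exp (r / 2) > 0 := Real.exp_pos _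
  have h1 : Real.exp (-(r/2)) = (Real.exp (r/2))⁻¹ := by
    rw [← Real.exp_neg]
  have h2 : Real.exp (-r) = (Real.exp (r/2))⁻¹ ^ 2 := by
    rw [← Real.exp_neg, ← Real.exp_nat_mul]
    ring_nf
  rw [h1, h2]
  have hpos : 0 < Real.exp (r/2) + (Real.exp (r/2))⁻¹ := by positivity
  have hpos2 : 0 < 1 + (Real.exp (r/2))⁻¹ ^ 2 := by positivity
  field_simp

lemma tanh_lt_one' (x : ℝ) : Real.tanh x < 1 := by
  have := tanh_half (2 * x)
  norm_num at this
  rw [this]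
  have h := Real.exp_pos (-(2*x))
  rw [div_lt_one (by linarith)]
  linarith

lemma neg_one_lt_tanh' (x : ℝ) : -1 < Real.tanh x := by
  have := tanh_half (2 * x)
  norm_num at this
  rw [this]
  have h := Real.exp_pos (-(2*x))
  rw [lt_div_iff₀ (by linarith)]
  linarith

lemma artanh_tanh (x : ℝ) : _root_.artanh (Real.tanh x) = x := by
  have := tanh_half (2 * x)
  norm_num at this
  rw [_root_.artanh, this]
  have h := Real.exp_pos (-(2*x))
  have h1 : 1 + Real.exp (-(2*x)) > 0 := by linarith
  have : (1 + (1 - Real.exp (-(2 * x))) / (1 + Real.exp (-(2 * x)))) /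
      (1 - (1 - Real.exp (-(2 * x))) / (1 + Real.exp (-(2 * x)))) = (Real.exp (-(2*x)))⁻¹ := by
    field_simp
    ring
  rw [this, Real.log_inv, Real.log_exp]
  ring

lemma real_duality (r s : ℝ) :
    Real.logb 2 (1 + Real.exp (-(r + s)))
      + Real.logb 2 (1 + Real.exp (-(2 * _root_.artanh (Real.tanh (r/2) * Real.tanh (s/2)))))
    = Real.logb 2 (1 + Real.exp (-r)) + Real.logb 2 (1 + Real.exp (-s)) := by
  have hu : 0 < Real.exp (-r) := Real.exp_pos _
  have hv : 0 < Real.exp (-s) := Real.exp_pos _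
  set u := Real.exp (-r) with hu'
  set v := Real.exp (-s) with hv'
  have huv : Real.exp (-(r + s)) = u * v := by rw [neg_add, Real.exp_add]
  set t : ℝ := (1 - u) / (1 + u) * ((1 - v) / (1 - -v)) with ht'
  have ht : Real.tanh (r/2) * Real.tanh (s/2) = t := by
    rw [tanh_half, tanh_half, ht', hu', hv', sub_neg_eq_add]
  have h1t : 1 - t = 2 * (u + v) / ((1 + u) * (1 + v)) := by
    rw [ht', sub_neg_eq_add]; field_simp; ring
  have h2t : 1 + t = 2 * (1 + u * v) / ((1 + u) * (1 + v)) := by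
    rw [ht', sub_neg_eq_add]; field_simp; ring
  have h1tpos : 0 < 1 - t := by rw [h1t]; positivity
  have h2tpos : 0 < 1 + t := by rw [h2t]; positivity
  have hq : (1 + t) / (1 - t) > 0 := by positivity
  have he : Real.exp (-(2 * _root_.artanh t)) = (1 - t) / (1 + t) := by
    rw [_root_.artanh]
    have : -(2 * (Real.log ((1 + t) / (1 - t)) / 2)) = -Real.log ((1+t)/(1-t)) := by ring
    rw [this, Real.exp_neg, Real.exp_log hq, inv_div]
  have hA : 1 + (1 - t) / (1 + t) = (1 + u) * (1 + v) / (1 + u * v) := by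
    rw [h1t, h2t]
    have w1 : (0:ℝ) < 1 + u := by linarith
    have w2 : (0:ℝ) < 1 + v := by linarith
    have w3 : (0:ℝ) < 1 + u * v := by positivity
    field_simp
    ring
  rw [ht, he, huv, hA]
  have w3 : (0:ℝ) < 1 + u * v := by positivity
  rw [Real.logb, Real.logb, Real.logb, Real.logb, Real.log_div (by positivity) (by positivity),
    Real.log_mul (by positivity) (by positivity)]
  ring

lemma measurable_setOf_eq' {α : Type*} [MeasurableSpace α] [MeasurableSingletonClass α]
    {β : Type*} [MeasurableSpace β] {f : β → α} (hf : Measurable f) (c : α) :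
    MeasurableSet {x | f x = c} := hf (measurableSet_singleton c)

lemma measurable_entFn : Measurable entFn := by
  unfold entFn
  refine Measurable.ite (measurable_setOf_eq' measurable_id ⊤) measurable_const ?_
  refine Measurable.ite (measurable_setOf_eq' measurable_id ⊥) measurable_const ?_
  exact ((Real.measurable_log.comp
    ((measurable_const.add (Real.measurable_exp.comp measurable_ereal_toReal.neg))))).div_const _

lemma measurable_eadd : Measurable (fun p : EReal × EReal => p.1 + p.2) := by
  have heq : (fun p : EReal × EReal => p.1 + p.2) = fun p =>
      if p.1 = ⊥ then ⊥ else if p.2 = ⊥ then ⊥ else if p.1 = ⊤ then ⊤ else if p.2 = ⊤ then ⊤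
      else ((p.1.toReal + p.2.toReal : ℝ) : EReal) := by
    funext p
    obtain ⟨a, b⟩ := p
    induction a using EReal.rec <;> induction b using EReal.rec <;>
      simp [← EReal.coe_add]
  rw [heq]
  refine Measurable.ite (measurable_setOf_eq' measurable_fst ⊥) measurable_const ?_
  refine Measurable.ite (measurable_setOf_eq' measurable_snd ⊥) measurable_const ?_
  refine Measurable.ite (measurable_setOf_eq' measurable_fst ⊤) measurable_const ?_
  refine Measurable.ite (measurable_setOf_eq' measurable_snd ⊤) measurable_const ?_
  exact measurable_coe_real_ereal.comp
    ((measurable_ereal_toReal.comp measurable_fst).add (measurable_ereal_toReal.comp measurable_snd))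

lemma pointwise_duality (a b : EReal) (ha : a ≠ ⊥) (hb : b ≠ ⊥) :
    entFn (a + b) + entFn (boxFn (a, b)) = entFn a + entFn b := by
  have etanh_coe : ∀ r : ℝ, etanh (r : EReal) = Real.tanh (r / 2) := by
    intro r; simp [etanh]
  have entFn_coe : ∀ r : ℝ, entFn (r : EReal) = Real.logb 2 (1 + Real.exp (-r)) := by
    intro r; simp [entFn]
  have hb1 : ∀ s : ℝ, boxFn (⊤, (s : EReal)) = (s : EReal) := by
    intro s
    have h1 : etanh ⊤ * etanh (s : EReal) = Real.tanh (s / 2) := by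
      simp [etanh]
    rw [boxFn]
    simp only [h1]
    rw [if_neg (tanh_lt_one' _).ne, if_neg (neg_one_lt_tanh' _).ne']
    have : 2 * _root_.artanh (Real.tanh (s / 2)) = s := by rw [_root_.artanh_tanh]; ring
    rw [this]
  have hb1' : ∀ s : ℝ, boxFn ((s : EReal), ⊤) = (s : EReal) := by
    intro s
    have h1 : etanh (s : EReal) * etanh ⊤ = Real.tanh (s / 2) := by
      simp [etanh]
    rw [boxFn]
    simp only [h1]
    rw [if_neg (tanh_lt_one' _).ne, if_neg (neg_one_lt_tanh' _).ne']
    have : 2 * _root_.artanh (Real.tanh (s / 2)) = s := by rw [_root_.artanh_tanh]; ring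
    rw [this]
  induction a using EReal.rec with
  | bot => exact absurd rfl ha
  | top =>
    induction b using EReal.rec with
    | bot => exact absurd rfl hb
    | top =>
      have : boxFn ((⊤ : EReal), (⊤ : EReal)) = ⊤ := by
        rw [boxFn]; simp [etanh]
      rw [this]
      simp [entFn]
    | coe s =>
      rw [hb1 s, EReal.top_add_coe]
  | coe r =>
    induction b using EReal.rec with
    | bot => exact absurd rfl hb
    | top =>
      rw [hb1' r, EReal.coe_add_top]
      ring
    | coe s =>
      rw [← EReal.coe_add]
      have hbox : boxFn ((r : EReal), (s : EReal))
          = ((2 * _root_.artanh (Real.tanh (r / 2) * Real.tanh (s / 2)) : ℝ) : EReal) := by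
        rw [boxFn]
        simp only [etanh_coe]
        have h1 : Real.tanh (r / 2) * Real.tanh (s / 2) < 1 := by
          calc Real.tanh (r / 2) * Real.tanh (s / 2) ≤ |Real.tanh (r / 2) * Real.tanh (s / 2)| :=
                le_abs_self _
            _ = |Real.tanh (r / 2)| * |Real.tanh (s / 2)| := abs_mul _ _
            _ < 1 := by
                have a1 := abs_lt.2 ⟨neg_one_lt_tanh' (r/2), tanh_lt_one' (r/2)⟩
                have a2 := abs_lt.2 ⟨neg_one_lt_tanh' (s/2), tanh_lt_one' (s/2)⟩
                nlinarith [abs_nonneg (Real.tanh (r/2)), abs_nonneg (Real.tanh (s/2))]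
        have h2 : -1 < Real.tanh (r / 2) * Real.tanh (s / 2) := by
          have a1 := abs_lt.2 ⟨neg_one_lt_tanh' (r/2), tanh_lt_one' (r/2)⟩
          have a2 := abs_lt.2 ⟨neg_one_lt_tanh' (s/2), tanh_lt_one' (s/2)⟩
          nlinarith [abs_nonneg (Real.tanh (r/2)), abs_nonneg (Real.tanh (s/2)),
            neg_abs_le (Real.tanh (r/2) * Real.tanh (s/2)),
            abs_mul (Real.tanh (r/2)) (Real.tanh (s/2))]
        rw [if_neg h1.ne, if_neg h2.ne']
      rw [hbox, entFn_coe, entFn_coe, entFn_coe, entFn_coe]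
      exact real_duality r s

lemma entFn_nonneg (a : EReal) : 0 ≤ entFn a := by
  rw [entFn]
  split
  · exact le_refl 0
  split
  · exact le_refl 0
  · refine Real.logb_nonneg one_lt_two ?_
    have := Real.exp_pos (-EReal.toReal a)
    linarith

lemma measurable_neg_ereal : Measurable (fun a : EReal => -a) :=
  continuous_neg.measurable

lemma symm_bot_null {x : Measure EReal} (h : SymmetricM x) : x {⊥} = 0 := by
  have h1 := h {⊤} (measurableSet_singleton _)
  have h2 : (fun a : EReal => -a) ⁻¹' {⊤} = {⊥} := by
    ext a
    simp [EReal.neg_eq_top_iff]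
  rw [h2, lintegral_singleton] at h1
  simpa [eexp] using h1

lemma symm_map_neg {x : Measure EReal} (h : SymmetricM x) :
    Measure.map (fun a : EReal => -a) x = x.withDensity (fun a => eexp (-a)) := by
  ext E hE
  rw [Measure.map_apply measurable_neg_ereal hE, withDensity_apply _ hE]
  exact h E hE

lemma measurable_eexp_neg : Measurable (fun a : EReal => eexp (-a)) := by
  have hx : Measurable eexp := by
    unfold eexp
    refine Measurable.ite (measurable_setOf_eq' measurable_id ⊤) measurable_const ?_
    refine Measurable.ite (measurable_setOf_eq' measurable_id ⊥) measurable_const ?_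
    exact (Real.measurable_exp.comp measurable_ereal_toReal).ennreal_ofReal
  exact hx.comp measurable_neg_ereal

lemma bound3 (r : ℝ) (hr : 0 < r) :
    Real.exp (-r) * Real.logb 2 (1 + Real.exp r) ≤ 3 := by
  have l2 : (0.6931471803 : ℝ) < Real.log 2 := Real.log_two_gt_d9
  have hlog2 : (0:ℝ) < Real.log 2 := by linarith
  have he1 : (1:ℝ) ≤ Real.exp r := by nlinarith [Real.add_one_le_exp r]
  have h1 : Real.log (1 + Real.exp r) ≤ Real.log 2 + r := by
    calc Real.log (1 + Real.exp r) ≤ Real.log (2 * Real.exp r) :=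
          Real.log_le_log (by positivity) (by linarith)
      _ = Real.log 2 + r := by
          rw [Real.log_mul two_ne_zero (Real.exp_pos r).ne', Real.log_exp]
  have h2 : r * Real.exp (-r) ≤ 1 := by
    rw [Real.exp_neg]
    have hr2 : r ≤ Real.exp r := by nlinarith [Real.add_one_le_exp r]
    calc r * (Real.exp r)⁻¹ ≤ Real.exp r * (Real.exp r)⁻¹ := by
          gcongr
      _ = 1 := mul_inv_cancel₀ (Real.exp_pos r).ne'
  have h3 : Real.exp (-r) ≤ 1 := by
    rw [Real.exp_neg]
    exact inv_le_one_of_one_le₀ he1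
  rw [Real.logb, mul_div_assoc', div_le_iff₀ hlog2]
  have h4 : Real.exp (-r) * Real.log (1 + Real.exp r)
      ≤ Real.exp (-r) * (Real.log 2 + r) :=
    mul_le_mul_of_nonneg_left h1 (Real.exp_pos (-r)).le
  have h5 : Real.exp (-r) * Real.log 2 ≤ Real.log 2 :=
    mul_le_of_le_one_left hlog2.le h3
  nlinarith

lemma lint_entFn_lt_top {x : Measure EReal} [IsProbabilityMeasure x] (h : SymmetricM x) :
    ∫⁻ a, ENNReal.ofReal (entFn a) ∂x < ⊤ := by
  set f : EReal → ℝ≥0∞ := fun a => ENNReal.ofReal (entFn a) with hf'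
  have hm : Measurable f := measurable_entFn.ennreal_ofReal
  rw [← lintegral_add_compl f (measurableSet_Iio (a := (0 : EReal)))]
  have part2 : ∫⁻ a in (Iio (0:EReal))ᶜ, f a ∂x ≤ 1 := by
    have hle : ∀ a ∈ (Iio (0:EReal))ᶜ, f a ≤ 1 := by
      intro a _ha
      rw [hf']
      induction a using EReal.rec with
      | bot => simp [entFn]
      | top => simp [entFn]
      | coe r =>
        have hcase : Real.exp (-r) ≤ 1 ∨ (1:ℝ≥0∞) ≥ ENNReal.ofReal (entFn r) → True := fun _ => trivial
        by_cases hr : 0 ≤ r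
        · have hexp : Real.exp (-r) ≤ 1 := by
            rw [Real.exp_neg]
            exact inv_le_one_of_one_le₀ (Real.one_le_exp hr)
          have : entFn (r : EReal) ≤ 1 := by
            have h0 : entFn (r : EReal) = Real.logb 2 (1 + Real.exp (-r)) := by simp [entFn]
            rw [h0]
            have : Real.logb 2 (1 + Real.exp (-r)) ≤ Real.logb 2 2 := by
              apply (Real.logb_le_logb one_lt_two (by positivity) (by norm_num)).2
              linarith
            simpa using this
          calc ENNReal.ofReal (entFn (r:EReal)) ≤ ENNReal.ofReal 1 := ENNReal.ofReal_le_ofReal this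
            _ = 1 := ENNReal.ofReal_one
        · -- this case contradicts a ∈ (Iio 0)ᶜ, but we can also just exclude it
          exfalso
          apply _ha
          rw [Set.mem_Iio]
          exact_mod_cast lt_of_not_ge hr
    calc ∫⁻ a in (Iio (0:EReal))ᶜ, f a ∂x ≤ ∫⁻ _a in (Iio (0:EReal))ᶜ, 1 ∂x :=
          setLIntegral_mono measurable_const hle
      _ = x (Iio (0:EReal))ᶜ := setLIntegral_one _
      _ ≤ 1 := prob_le_one
  have part1 : ∫⁻ a in Iio (0:EReal), f a ∂x ≤ 3 := by
    have hg : Measurable fun b : EReal => f (-b) := hm.comp measurable_neg_ereal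
    have step1 : ∫⁻ a in Iio (0:EReal), f a ∂x
        = ∫⁻ b in Ioi (0:EReal), f (-b) ∂(Measure.map (fun a : EReal => -a) x) := by
      rw [setLIntegral_map measurableSet_Ioi hg measurable_neg_ereal]
      have hpre : (fun a : EReal => -a) ⁻¹' Ioi 0 = Iio 0 := by
        ext a
        simp only [Set.mem_preimage, Set.mem_Ioi, Set.mem_Iio]
        rw [show (0:EReal) = -0 by simp, EReal.neg_lt_neg_iff]
        simp
      rw [hpre]
      congr 1
      funext a
      rw [neg_neg]
    rw [step1, symm_map_neg h,
      setLIntegral_withDensity_eq_setLIntegral_mul x measurable_eexp_neg hg measurableSet_Ioi]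
    have hle : ∀ b ∈ Ioi (0:EReal), eexp (-b) * f (-b) ≤ ENNReal.ofReal 3 := by
      intro b hb
      induction b using EReal.rec with
      | bot => simp at hb
      | top =>
        have : f (-(⊤:EReal)) = 0 := by
          simp [hf', entFn]
        rw [this, mul_zero]
        exact zero_le
      | coe r =>
        have hr : (0:ℝ) < r := by
          rw [Set.mem_Ioi] at hb
          exact_mod_cast hb
        have h1 : eexp (-(r:EReal)) = ENNReal.ofReal (Real.exp (-r)) := by
          rw [show (-(r:EReal)) = ((-r : ℝ) : EReal) by rw [EReal.coe_neg]]
          simp [eexp]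
        have h2 : f (-(r:EReal)) = ENNReal.ofReal (Real.logb 2 (1 + Real.exp r)) := by
          rw [hf', show (-(r:EReal)) = ((-r : ℝ) : EReal) by rw [EReal.coe_neg]]
          simp [entFn]
        rw [h1, h2, ← ENNReal.ofReal_mul (Real.exp_pos (-r)).le]
        exact ENNReal.ofReal_le_ofReal (bound3 r hr)
    calc ∫⁻ b in Ioi (0:EReal), (fun b => eexp (-b) * f (-b)) b ∂x
        ≤ ∫⁻ _b in Ioi (0:EReal), ENNReal.ofReal 3 ∂x :=
          setLIntegral_mono measurable_const hle
      _ = ENNReal.ofReal 3 * x (Ioi (0:EReal)) := setLIntegral_const _ _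
      _ ≤ ENNReal.ofReal 3 * 1 := by
          exact mul_le_mul_right prob_le_one _
      _ = ENNReal.ofReal 3 := mul_one _
      _ ≤ 3 := by
          rw [show ((3:ℝ≥0∞)) = ENNReal.ofReal 3 by norm_num]
  calc ∫⁻ a in Iio (0:EReal), f a ∂x + ∫⁻ a in (Iio (0:EReal))ᶜ, f a ∂x
      ≤ 3 + 1 := add_le_add part1 part2
    _ < ⊤ := by norm_num

lemma integrable_entFn {x : Measure EReal} [IsProbabilityMeasure x] (h : SymmetricM x) :
    Integrable entFn x := by
  refine ⟨measurable_entFn.aestronglyMeasurable, ?_⟩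
  rw [hasFiniteIntegral_iff_ofReal (Filter.Eventually.of_forall entFn_nonneg)]
  exact lint_entFn_lt_top h

lemma duality_HH (a b : Measure EReal) [IsProbabilityMeasure a] [IsProbabilityMeasure b]
    (ha : SymmetricM a) (hb : SymmetricM b) :
    Hent (vconv a b) + Hent (cconv a b) = Hent a + Hent b := by
  set μ := a.prod b with hμ
  have hbad1 : μ {p : EReal × EReal | p.1 = ⊥} = 0 := by
    have he : {p : EReal × EReal | p.1 = ⊥} = Prod.fst ⁻¹' {⊥} := rfl
    rw [he, ← Measure.map_apply measurable_fst (measurableSet_singleton _),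
      Measure.map_fst_prod]
    simp [symm_bot_null ha]
  have hbad2 : μ {p : EReal × EReal | p.2 = ⊥} = 0 := by
    have he : {p : EReal × EReal | p.2 = ⊥} = Prod.snd ⁻¹' {⊥} := rfl
    rw [he, ← Measure.map_apply measurable_snd (measurableSet_singleton _),
      Measure.map_snd_prod]
    simp [symm_bot_null hb]
  have hae : ∀ᵐ p ∂μ, p.1 ≠ ⊥ ∧ p.2 ≠ ⊥ := by
    rw [MeasureTheory.ae_iff]
    refine measure_mono_null ?_ (measure_union_null hbad1 hbad2)
    intro p hp
    simp only [Set.mem_setOf_eq, not_and_or, not_not] at hp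
    simpa using hp
  have key : (fun p : EReal × EReal => entFn (p.1 + p.2) + entFn (boxFn p))
      =ᵐ[μ] fun p => entFn p.1 + entFn p.2 := by
    filter_upwards [hae] with p hp
    have := pointwise_duality p.1 p.2 hp.1 hp.2
    simpa using this
  have ia := integrable_entFn ha
  have ib := integrable_entFn hb
  have hmapf : Measure.map Prod.fst μ = a := by rw [Measure.map_fst_prod]; simp
  have hmaps : Measure.map Prod.snd μ = b := by rw [Measure.map_snd_prod]; simp
  have iaf : Integrable (fun p : EReal × EReal => entFn p.1) μ := by
    have hiff := integrable_map_measure (μ := μ) (g := entFn) (f := Prod.fst)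
      measurable_entFn.aestronglyMeasurable measurable_fst.aemeasurable
    rw [hmapf] at hiff
    exact hiff.mp ia
  have ibf : Integrable (fun p : EReal × EReal => entFn p.2) μ := by
    have hiff := integrable_map_measure (μ := μ) (g := entFn) (f := Prod.snd)
      measurable_entFn.aestronglyMeasurable measurable_snd.aemeasurable
    rw [hmaps] at hiff
    exact hiff.mp ib
  have isum : Integrable (fun p : EReal × EReal => entFn p.1 + entFn p.2) μ := iaf.add ibf
  have iv : Integrable (fun p : EReal × EReal => entFn (p.1 + p.2)) μ := by
    refine Integrable.mono isum
      ((measurable_entFn.comp measurable_eadd).aestronglyMeasurable) ?_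
    filter_upwards [key] with p hp
    rw [Real.norm_eq_abs, Real.norm_eq_abs, abs_of_nonneg (entFn_nonneg _),
      abs_of_nonneg (add_nonneg (entFn_nonneg _) (entFn_nonneg _))]
    have := entFn_nonneg (boxFn p)
    linarith
  have ic : Integrable (fun p : EReal × EReal => entFn (boxFn p)) μ := by
    refine Integrable.mono isum
      ((measurable_entFn.comp measurable_boxFn).aestronglyMeasurable) ?_
    filter_upwards [key] with p hp
    rw [Real.norm_eq_abs, Real.norm_eq_abs, abs_of_nonneg (entFn_nonneg _),
      abs_of_nonneg (add_nonneg (entFn_nonneg _) (entFn_nonneg _))]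
    have := entFn_nonneg (p.1 + p.2)
    linarith
  have hv : Hent (vconv a b) = ∫ p, entFn (p.1 + p.2) ∂μ := by
    rw [Hent, vconv,
      integral_map measurable_eadd.aemeasurable measurable_entFn.aestronglyMeasurable]
  have hc : Hent (cconv a b) = ∫ p, entFn (boxFn p) ∂μ := by
    rw [Hent, cconv,
      integral_map measurable_boxFn.aemeasurable measurable_entFn.aestronglyMeasurable]
  have hha : Hent a = ∫ p, entFn p.1 ∂μ := by
    rw [Hent, ← hmapf,
      integral_map measurable_fst.aemeasurable measurable_entFn.aestronglyMeasurable]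
  have hhb : Hent b = ∫ p, entFn p.2 ∂μ := by
    rw [Hent, ← hmaps,
      integral_map measurable_snd.aemeasurable measurable_entFn.aestronglyMeasurable]
  rw [hv, hc, hha, hhb, ← integral_add iv ic, ← integral_add iaf ibf]
  exact integral_congr_ae key

/-- For symmetric probability measures `x₁, x₂, x₃, x₄`, with the entropy
functional and operators `⊛`, `⊞` extended bilinearly to differences of measures:
`H((x₁−x₂) ⊛ (x₃−x₄)) + H((x₁−x₂) ⊞ (x₃−x₄)) = 0` (written here with the bilinear
expansions spelled out). -/
theorem stmt7 (x1 x2 x3 x4 : Measure EReal)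
    [IsProbabilityMeasure x1] [IsProbabilityMeasure x2]
    [IsProbabilityMeasure x3] [IsProbabilityMeasure x4]
    (h1 : SymmetricM x1) (h2 : SymmetricM x2) (h3 : SymmetricM x3) (h4 : SymmetricM x4) :
    ((Hent (vconv x1 x3) - Hent (vconv x1 x4)) - (Hent (vconv x2 x3) - Hent (vconv x2 x4)))
      + ((Hent (cconv x1 x3) - Hent (cconv x1 x4))
          - (Hent (cconv x2 x3) - Hent (cconv x2 x4))) = 0 := by
  have d13 := duality_HH x1 x3 h1 h3
  have d14 := duality_HH x1 x4 h1 h4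
  have d23 := duality_HH x2 x3 h2 h3
  have d24 := duality_HH x2 x4 h2 h4
  linarith
end
end
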